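/- arXiv:1310.8359 — 3 statements merged into one kernel-verified Lean document; each statement's English description precedes it below -/
import Mathlib

section
/- Define J⁺ = Σ_{α>0} r_α c^{−α} c^α, J⁻ = Σ_{α>0} (1/r_α) b_{−α} b_α, and gh_rel = Σ_{α>0}(c^{−α} b_α − b_{−α} c^α), where r_α = ⟨χ+2ρ, H_α⟩ > 0 for α > 0. Then these operators satisfy the sl(2) structural relations [J⁺, J⁻] = gh_rel and [gh_rel, J^±] = ±2 J^±. -/
/-!
For a positive root `α` the raising, lowering and ghost bilinears `c (-α) * c α`,
`b (-α) * b α` and `c (-α) * b α - b (-α) * c α` are the summands of `J⁺`, `J⁻` and `gh_rel`.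
The anticommutation relations of the single mode `c (±α), b (±α)` make them satisfy the
`sl(2)` relations. Bilinears in the generators of two different modes commute, because each
generator anticommutes with both factors of the other bilinear. Hence the brackets of the
sums are the sums of the single-mode brackets: the weights `r α` and `(r α)⁻¹` cancel in
`[J⁺, J⁻]`, and rescaling the summands of `J^±` does not change their eigenvalues under
`ad gh_rel`.
-/

open Finset
open scoped Pointwise

attribute [local instance] LieRing.ofAssociativeRing

section LieSums

variable {ι K L : Type*} [LieRing L]

theorem lie_sum_sum_of_lie_eq_zero (s : Finset ι) (x y : ι → L)
    (h : ∀ i ∈ s, ∀ j ∈ s, i ≠ j → ⁅x i, y j⁆ = 0) :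
    ⁅∑ i ∈ s, x i, ∑ j ∈ s, y j⁆ = ∑ i ∈ s, ⁅x i, y i⁆ := by
  rw [sum_lie]
  refine sum_congr rfl fun i hi => ?_
  rw [lie_sum]
  exact sum_eq_single i (fun j hj hji => h i hi j hj hji.symm) (absurd hi)

variable [Field K] [LieAlgebra K L] (s : Finset ι) (r : ι → K) (e f h : ι → L)

theorem lie_sum_smul_sum_inv_smul (hr : ∀ i ∈ s, r i ≠ 0) (hef : ∀ i ∈ s, ⁅e i, f i⁆ = h i)
    (hef' : ∀ i ∈ s, ∀ j ∈ s, i ≠ j → ⁅e i, f j⁆ = 0) :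
    ⁅∑ i ∈ s, r i • e i, ∑ i ∈ s, (r i)⁻¹ • f i⁆ = ∑ i ∈ s, h i := by
  rw [lie_sum_sum_of_lie_eq_zero s _ _ fun i hi j hj hij => by
    rw [smul_lie, lie_smul, hef' i hi j hj hij, smul_zero, smul_zero]]
  refine sum_congr rfl fun i hi => ?_
  rw [smul_lie, lie_smul, hef i hi, smul_smul, mul_inv_cancel₀ (hr i hi), one_smul]

theorem lie_sum_sum_smul_eq_smul (a : K) (hhe : ∀ i ∈ s, ⁅h i, e i⁆ = a • e i)
    (hhe' : ∀ i ∈ s, ∀ j ∈ s, i ≠ j → ⁅h i, e j⁆ = 0) :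
    ⁅∑ i ∈ s, h i, ∑ i ∈ s, r i • e i⁆ = a • ∑ i ∈ s, r i • e i := by
  rw [lie_sum_sum_of_lie_eq_zero s _ _ fun i hi j hj hij => by
    rw [lie_smul, hhe' i hi j hj hij, smul_zero], smul_sum]
  refine sum_congr rfl fun i hi => ?_
  rw [lie_smul, hhe i hi, smul_comm]

end LieSums

section Anticommuting

variable {A : Type*} [Ring A]

theorem lie_mul_mul (x y z w : A) :
    ⁅x * y, z * w⁆ = x * (y * z + z * y) * w - x * z * (y * w + w * y)
      + (x * z + z * x) * w * y - z * (x * w + w * x) * y := by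
  simp only [Ring.lie_def]
  noncomm_ring

theorem commute_mul_of_anticommute {x z w : A} (hz : x * z + z * x = 0)
    (hw : x * w + w * x = 0) : Commute x (z * w) := by
  have hz' : x * z = -(z * x) := eq_neg_of_add_eq_zero_left hz
  have hw' : x * w = -(w * x) := eq_neg_of_add_eq_zero_left hw
  calc x * (z * w) = -(z * (x * w)) := by rw [← mul_assoc, hz', neg_mul, mul_assoc]
    _ = z * w * x := by rw [hw', mul_neg, neg_neg, mul_assoc]

theorem commute_mul_mul_of_anticommute {G H : Set A}
    (hGH : ∀ u ∈ G, ∀ v ∈ H, u * v + v * u = 0) {u v x y : A}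
    (hu : u ∈ G) (hv : v ∈ G) (hx : x ∈ H) (hy : y ∈ H) : Commute (u * v) (x * y) :=
  (commute_mul_of_anticommute (hGH u hu x hx) (hGH u hu y hy)).mul_left
    (commute_mul_of_anticommute (hGH v hv x hx) (hGH v hv y hy))

end Anticommuting

section CanonicalAnticommutation

variable {Q : Type*} [InvolutiveNeg Q] {P : Set Q} {α β : Q}

theorem neg_mem_union_neg (hα : α ∈ P) : -α ∈ P ∪ -P :=
  Or.inr (Set.neg_mem_neg.2 hα)

theorem ne_neg_of_mem (hP : ∀ α ∈ P, -α ∉ P) (hα : α ∈ P) (hβ : β ∈ P) : α ≠ -β :=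
  fun h => hP β hβ (h ▸ hα)

variable [DecidableEq Q] {A : Type*} [Ring A]

/-- Canonical anticommutation relations on the index set `S`. -/
structure IsCAR (S : Set Q) (c b : Q → A) : Prop where
  c_b : ∀ α ∈ S, ∀ β ∈ S, c α * b β + b β * c α = if α = -β then 1 else 0
  c_c : ∀ α ∈ S, ∀ β ∈ S, c α * c β + c β * c α = 0
  b_b : ∀ α ∈ S, ∀ β ∈ S, b α * b β + b β * b α = 0

def modeGenerators (c b : Q → A) (α : Q) : Set A := {c (-α), c α, b (-α), b α}

namespace IsCAR

variable {c b : Q → A}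

theorem b_c {S : Set Q} (hS : IsCAR S c b) (hα : α ∈ S) (hβ : β ∈ S) :
    b β * c α + c α * b β = if α = -β then 1 else 0 := by
  rw [add_comm, hS.c_b α hα β hβ]

theorem anticommute_of_ne (hP : ∀ α ∈ P, -α ∉ P) (hS : IsCAR (P ∪ -P) c b)
    (hα : α ∈ P) (hβ : β ∈ P) (hne : α ≠ β) :
    ∀ u ∈ modeGenerators c b α, ∀ v ∈ modeGenerators c b β, u * v + v * u = 0 := by
  have h₁ := ne_neg_of_mem hP hα hβ
  have h₂ := ne_neg_of_mem hP hβ hα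
  have h₃ : -α ≠ -β := fun h => hne (neg_injective h)
  simp only [modeGenerators, Set.mem_insert_iff, Set.mem_singleton_iff]
  rintro u (rfl | rfl | rfl | rfl) v (rfl | rfl | rfl | rfl) <;>
    simp [hS.c_b, hS.b_c, hS.c_c, hS.b_b, Set.mem_union_left _ hα, Set.mem_union_left _ hβ,
      neg_mem_union_neg hα, neg_mem_union_neg hβ, hne, h₁, h₂, h₃, hne.symm, h₁.symm, h₂.symm,
      h₃.symm]

theorem lie_mul_mul_eq_zero_of_ne (hP : ∀ α ∈ P, -α ∉ P) (hS : IsCAR (P ∪ -P) c b)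
    (hα : α ∈ P) (hβ : β ∈ P) (hne : α ≠ β) {u v x y : A}
    (hu : u ∈ modeGenerators c b α) (hv : v ∈ modeGenerators c b α)
    (hx : x ∈ modeGenerators c b β) (hy : y ∈ modeGenerators c b β) :
    ⁅u * v, x * y⁆ = 0 :=
  (commute_mul_mul_of_anticommute (hS.anticommute_of_ne hP hα hβ hne) hu hv hx hy).lie_eq

theorem lie_raise_lower_of_ne (hP : ∀ α ∈ P, -α ∉ P) (hS : IsCAR (P ∪ -P) c b)
    (hα : α ∈ P) (hβ : β ∈ P) (hne : α ≠ β) :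
    ⁅c (-α) * c α, b (-β) * b β⁆ = 0 := by
  rw [hS.lie_mul_mul_eq_zero_of_ne hP hα hβ hne] <;> simp [modeGenerators]

theorem lie_ghost_raise_of_ne (hP : ∀ α ∈ P, -α ∉ P) (hS : IsCAR (P ∪ -P) c b)
    (hα : α ∈ P) (hβ : β ∈ P) (hne : α ≠ β) :
    ⁅c (-α) * b α - b (-α) * c α, c (-β) * c β⁆ = 0 := by
  rw [sub_lie, hS.lie_mul_mul_eq_zero_of_ne hP hα hβ hne, hS.lie_mul_mul_eq_zero_of_ne hP hα hβ hne,
    sub_zero] <;> simp [modeGenerators]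

theorem lie_ghost_lower_of_ne (hP : ∀ α ∈ P, -α ∉ P) (hS : IsCAR (P ∪ -P) c b)
    (hα : α ∈ P) (hβ : β ∈ P) (hne : α ≠ β) :
    ⁅c (-α) * b α - b (-α) * c α, b (-β) * b β⁆ = 0 := by
  rw [sub_lie, hS.lie_mul_mul_eq_zero_of_ne hP hα hβ hne, hS.lie_mul_mul_eq_zero_of_ne hP hα hβ hne,
    sub_zero] <;> simp [modeGenerators]

theorem lie_raise_lower (hP : ∀ α ∈ P, -α ∉ P) (hS : IsCAR (P ∪ -P) c b) (hα : α ∈ P) :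
    ⁅c (-α) * c α, b (-α) * b α⁆ = c (-α) * b α - b (-α) * c α := by
  have h := ne_neg_of_mem hP hα hα
  simp [lie_mul_mul, hS.c_b, Set.mem_union_left _ hα, neg_mem_union_neg hα, h, h.symm]

theorem lie_ghost_raise (hP : ∀ α ∈ P, -α ∉ P) (hS : IsCAR (P ∪ -P) c b) (hα : α ∈ P) :
    ⁅c (-α) * b α - b (-α) * c α, c (-α) * c α⁆ = 2 • (c (-α) * c α) := by
  have h := ne_neg_of_mem hP hα hα
  simp [sub_lie, lie_mul_mul, hS.b_c, hS.c_c, Set.mem_union_left _ hα, neg_mem_union_neg hα, h,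
    h.symm]
  noncomm_ring

theorem lie_ghost_lower (hP : ∀ α ∈ P, -α ∉ P) (hS : IsCAR (P ∪ -P) c b) (hα : α ∈ P) :
    ⁅c (-α) * b α - b (-α) * c α, b (-α) * b α⁆ = -(2 • (b (-α) * b α)) := by
  have h := ne_neg_of_mem hP hα hα
  simp [sub_lie, lie_mul_mul, hS.c_b, hS.b_b, Set.mem_union_left _ hα, neg_mem_union_neg hα, h,
    h.symm]
  noncomm_ring

end IsCAR

end CanonicalAnticommutation

/-- the operators `J⁺ = Σ_{α>0} r_α c^{−α}c^α`,
`J⁻ = Σ_{α>0} (1/r_α) b_{−α}b_α` and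
`gh_rel = Σ_{α>0} (c^{−α}b_α − b_{−α}c^α)` satisfy the `sl(2)` relations
`[J⁺, J⁻] = gh_rel` and `[gh_rel, J^±] = ±2 J^±`. -/
theorem sl2_from_anomaly
    {Q A : Type*} [AddCommGroup Q] [DecidableEq Q] [Ring A] [Algebra ℂ A]
    (Rp : Finset Q)                         -- positive roots
    (c b : Q → A) (r : Q → ℂ)
    (Jp Jm gh : A)
    (hdisj : ∀ α ∈ Rp, -α ∉ Rp)
    -- r_α = ⟨χ+2ρ, H_α⟩ ≠ 0 for positive roots
    (hr : ∀ α ∈ Rp, r α ≠ 0)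
    -- canonical anticommutation relations on the root sector
    (hcb : ∀ α ∈ Rp ∪ Rp.image (fun a => -a), ∀ β ∈ Rp ∪ Rp.image (fun a => -a),
      c α * b β + b β * c α = if α = -β then (1 : A) else 0)
    (hcc : ∀ α ∈ Rp ∪ Rp.image (fun a => -a), ∀ β ∈ Rp ∪ Rp.image (fun a => -a),
      c α * c β + c β * c α = 0)
    (hbb : ∀ α ∈ Rp ∪ Rp.image (fun a => -a), ∀ β ∈ Rp ∪ Rp.image (fun a => -a),
      b α * b β + b β * b α = 0)
    (hJp : Jp = ∑ α ∈ Rp, r α • (c (-α) * c α))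
    (hJm : Jm = ∑ α ∈ Rp, (r α)⁻¹ • (b (-α) * b α))
    (hgh : gh = ∑ α ∈ Rp, (c (-α) * b α - b (-α) * c α)) :
    (Jp * Jm - Jm * Jp = gh)
    ∧ (gh * Jp - Jp * gh = (2 : ℂ) • Jp)
    ∧ (gh * Jm - Jm * gh = (-2 : ℂ) • Jm) := by
  have hmem : ∀ α ∈ (Rp : Set Q) ∪ -Rp, α ∈ Rp ∪ Rp.image (fun a => -a) := by
    rintro α (hα | hα)
    · exact mem_union_left _ hα
    · exact mem_union_right _ (mem_image.2 ⟨-α, hα, neg_neg α⟩)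
  have hS : IsCAR ((Rp : Set Q) ∪ -Rp) c b :=
    ⟨fun α hα β hβ => hcb α (hmem α hα) β (hmem β hβ),
      fun α hα β hβ => hcc α (hmem α hα) β (hmem β hβ),
      fun α hα β hβ => hbb α (hmem α hα) β (hmem β hβ)⟩
  subst hJp hJm hgh
  simp only [← Ring.lie_def]
  refine ⟨lie_sum_smul_sum_inv_smul Rp r _ _ _ hr (fun α hα => hS.lie_raise_lower hdisj hα)
      fun α hα β hβ => hS.lie_raise_lower_of_ne hdisj hα hβ, ?_, ?_⟩
  · exact lie_sum_sum_smul_eq_smul Rp r _ _ (2 : ℂ) (fun α hα => by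
      rw [hS.lie_ghost_raise hdisj hα, two_nsmul, two_smul])
      fun α hα β hβ => hS.lie_ghost_raise_of_ne hdisj hα hβ
  · exact lie_sum_sum_smul_eq_smul Rp _ _ _ (-2 : ℂ) (fun α hα => by
      rw [hS.lie_ghost_lower hdisj hα, neg_smul, two_nsmul, two_smul])
      fun α hα β hβ => hS.lie_ghost_lower_of_ne hdisj hα hβ
end

section
/- The mixed anticommutators satisfy D_rel† D_rel^c + D_rel^c D_rel† = −gh_rel and (D_rel^c)† D_rel + D_rel (D_rel^c)† = −gh_rel. -/
/-! The first identity is the Leibniz rule `[J⁻, c]c + c[J⁻, c] = [J⁻, c²]` for `c = D_rel^c`,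
together with `c² = J⁺`; the second is its image under `†`, which fixes `gh_rel = [J⁺, J⁻]`
because `†` reverses products and swaps `J⁺` with `J⁻`. -/

theorem commutator_mul_add_mul_commutator {R : Type*} [Ring R] (a c : R) :
    (a * c - c * a) * c + c * (a * c - c * a) = a * (c * c) - c * c * a := by
  noncomm_ring

theorem map_sub_of_map_add {M N : Type*} [AddGroup M] [AddGroup N] (f : M → N)
    (hf : ∀ x y, f (x + y) = f x + f y) (x y : M) : f (x - y) = f x - f y :=
  map_sub (AddMonoidHom.mk' f hf) x y

theorem map_neg_of_map_add {M N : Type*} [AddGroup M] [AddGroup N] (f : M → N)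
    (hf : ∀ x y, f (x + y) = f x + f y) (x : M) : f (-x) = -f x :=
  map_neg (AddMonoidHom.mk' f hf) x

theorem mixed_anticommutators_general
    {A : Type*} [Ring A]
    (Drel Drelc Dreldag Drelcdag Jp Jm gh : A)
    (dag : A → A)
    -- † is an additive antiautomorphism
    (hdagadd : ∀ x y, dag (x + y) = dag x + dag y)
    (hdagmul : ∀ x y, dag (x * y) = dag y * dag x)
    -- † exchanges the operators with their conjugates
    (hdagDreldag : dag Dreldag = Drel)
    (hdagDrelc : dag Drelc = Drelcdag)
    (hdagJp : dag Jp = Jm) (hdagJm : dag Jm = Jp)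
    -- gh_rel = [J⁺, J⁻]
    (hgh : gh = Jp * Jm - Jm * Jp)
    -- [J⁻, D_rel^c] = D_rel† and (D_rel^c)² = J⁺
    (hJmDrelc : Jm * Drelc - Drelc * Jm = Dreldag)
    (hDrelc2 : Drelc * Drelc = Jp) :
    (Dreldag * Drelc + Drelc * Dreldag = -gh)
    ∧ (Drelcdag * Drel + Drel * Drelcdag = -gh) := by
  have hfirst : Dreldag * Drelc + Drelc * Dreldag = -gh := by
    rw [← hJmDrelc, commutator_mul_add_mul_commutator, hDrelc2, hgh, neg_sub]
  have hdag_gh : dag gh = gh := by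
    rw [hgh, map_sub_of_map_add dag hdagadd, hdagmul, hdagmul, hdagJp, hdagJm]
  refine ⟨hfirst, ?_⟩
  have hsecond := congrArg dag hfirst
  rwa [hdagadd, hdagmul, hdagmul, hdagDrelc, hdagDreldag, map_neg_of_map_add dag hdagadd,
    hdag_gh] at hsecond

/-- the mixed anticommutators satisfy
`D_rel† D_rel^c + D_rel^c D_rel† = −gh_rel` and
`(D_rel^c)† D_rel + D_rel (D_rel^c)† = −gh_rel`. -/
theorem mixed_anticommutators
    {A : Type*} [Ring A] [Algebra ℂ A]
    (Drel Drelc Dreldag Drelcdag Jp Jm gh : A)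
    (dag : A → A)
    -- † is an additive antiautomorphism
    (hdagadd : ∀ x y, dag (x + y) = dag x + dag y)
    (hdagmul : ∀ x y, dag (x * y) = dag y * dag x)
    -- † exchanges the operators with their conjugates
    (hdagDrel : dag Drel = Dreldag) (hdagDreldag : dag Dreldag = Drel)
    (hdagDrelc : dag Drelc = Drelcdag) (hdagDrelcdag : dag Drelcdag = Drelc)
    (hdagJp : dag Jp = Jm) (hdagJm : dag Jm = Jp)
    -- gh_rel = [J⁺, J⁻]
    (hgh : gh = Jp * Jm - Jm * Jp)
    -- [J⁻, D_rel^c] = D_rel† and (D_rel^c)² = J⁺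
    (hJmDrelc : Jm * Drelc - Drelc * Jm = Dreldag)
    (hDrelc2 : Drelc * Drelc = Jp) :
    (Dreldag * Drelc + Drelc * Dreldag = -gh)
    ∧ (Drelcdag * Drel + Drel * Drelcdag = -gh) :=
  mixed_anticommutators_general Drel Drelc Dreldag Drelcdag Jp Jm gh dag hdagadd hdagmul hdagDreldag
    hdagDrelc hdagJp hdagJm hgh hJmDrelc hDrelc2
end

section
/- Vanishing theorem: the relative anomalous cohomology spaces vanish in positive ghost number, H_rel^r = 0 for all r > 0. -/
/-! A harmonic cochain `Ψ` of ghost number `r > 0` satisfies `2 □Ψ = -r Ψ`, so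
`0 ≤ Re ⟪2 □Ψ, Ψ⟫ = -r ‖Ψ‖²` forces `Ψ = 0`. Hence the harmonic representative of a
closed cochain vanishes and the cochain is exact. -/

open RCLike in
theorem eq_zero_of_re_inner_nonneg_of_add_smul_eq_zero {𝕜 E : Type*} [RCLike 𝕜]
    [NormedAddCommGroup E] [InnerProductSpace 𝕜 E] {x y : E} {c : ℝ}
    (hy : 0 ≤ re (inner 𝕜 y x)) (hc : 0 < c) (h : y + (c : 𝕜) • x = 0) : x = 0 := by
  have hy_eq : y = -((c : 𝕜) • x) := eq_neg_of_add_eq_zero_left h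
  have hnorm : c * ‖x‖ ^ 2 ≤ 0 := by
    simpa [hy_eq, inner_smul_left, inner_self_eq_norm_sq] using hy
  have hsq : ‖x‖ ^ 2 ≤ 0 := nonpos_of_mul_nonpos_right hnorm hc
  simpa using hsq

/-- Vanishing theorem: the relative anomalous cohomology spaces
vanish in positive ghost number: every `D_rel`-closed cochain of relative ghost
number `r > 0` is a `D_rel`-coboundary. -/
theorem relative_cohomology_vanishing
    {M : Type*} [NormedAddCommGroup M] [InnerProductSpace ℂ M]
    (Arel : ℤ → Submodule ℂ M)              -- anomalous relative complex
    (Drel Δ Box gh : M →ₗ[ℂ] M)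
    -- Δ = 2□ + gh_rel
    (hΔ : ∀ x, Δ x = (2 : ℂ) • Box x + gh x)
    -- □ is non-negative w.r.t. the positive Kähler inner product
    (hBoxpos : ∀ x : M, 0 ≤ (RCLike.re (inner ℂ (Box x) x : ℂ)))
    -- gh_rel acts as multiplication by r on A_rel^r
    (hgh : ∀ (r : ℤ), ∀ x ∈ Arel r, gh x = (r : ℂ) • x)
    -- every relative class has a harmonic representative
    (hharmrep : ∀ (r : ℤ), ∀ x ∈ Arel r, Drel x = 0 →
      ∃ h ∈ Arel r, Δ h = 0 ∧ ∃ y ∈ Arel (r - 1), x = h + Drel y) :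
    ∀ (r : ℤ), 0 < r → ∀ x ∈ Arel r, Drel x = 0 →
      ∃ y ∈ Arel (r - 1), Drel y = x := by
  intro r hr x hx hDx
  obtain ⟨h, hh, hΔh, y, hy, rfl⟩ := hharmrep r x hx hDx
  have hBox_nonneg : 0 ≤ RCLike.re (inner ℂ ((2 : ℂ) • Box h) h) := by
    simpa [inner_smul_left] using mul_nonneg zero_le_two (hBoxpos h)
  have hkernel : (2 : ℂ) • Box h + ((r : ℝ) : ℂ) • h = 0 := by
    rw [Complex.ofReal_intCast, ← hgh r h hh, ← hΔ, hΔh]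
  have hr' : (0 : ℝ) < r := Int.cast_pos.mpr hr
  have harmonic_eq_zero : h = 0 :=
    eq_zero_of_re_inner_nonneg_of_add_smul_eq_zero hBox_nonneg hr' hkernel
  exact ⟨y, hy, by rw [harmonic_eq_zero, zero_add]⟩
end
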